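/- arXiv:2011.13712 — 5 statements merged into one kernel-verified Lean document; each statement's English description precedes it below -/
import Mathlib

section
/- If γ = 0, then for every α ∈ [0,1), a ∈ ℂ and every E > 0 the transmission and reflection coefficients are independent of the energy E, with the explicit values T(α,a,0,E) = 2|a|²(1+cos πα)/(1+|a|²)² and R(α,a,0,E) = (1+|a|⁴−2|a|² cos πα)/(1+|a|²)². In particular, for the bridging protocol (a = 1, γ = 0) one has T = (1+cos πα)/2 and R = (1−cos πα)/2. -/
open Filter Topology

/-- The denominator `D(α,a,γ,E)` of the scattering amplitudes for the type-`II_a`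
transmission protocol across the Grushin singularity. -/
noncomputable def Dcoef (α : ℝ) (a : ℂ) (γ E : ℝ) : ℂ :=
  ((E ^ ((1 + α) / 2) * Real.Gamma ((1 - α) / 2) * (1 + ‖a‖ ^ 2) : ℝ) : ℂ)
    + Complex.I * (γ : ℂ) * (((2 : ℝ) ^ (1 + α) : ℝ) : ℂ)
      * Complex.exp (Complex.I * (Real.pi : ℂ) * (α : ℂ) / 2)
      * ((Real.Gamma ((3 + α) / 2) : ℝ) : ℂ)

/-- The transmission coefficient `T(α,a,γ,E)`. -/
noncomputable def Tcoef (α : ℝ) (a : ℂ) (γ E : ℝ) : ℝ :=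
  ‖(((E ^ ((1 + α) / 2) * Real.Gamma ((1 - α) / 2) : ℝ) : ℂ)
      * (1 + Complex.exp (Complex.I * (Real.pi : ℂ) * (α : ℂ)))
      * (starRingEnd ℂ a) / Dcoef α a γ E)‖ ^ 2

/-- The reflection coefficient `R(α,a,γ,E)`. -/
noncomputable def Rcoef (α : ℝ) (a : ℂ) (γ E : ℝ) : ℝ :=
  ‖((((E ^ ((1 + α) / 2) * Real.Gamma ((1 - α) / 2) : ℝ) : ℂ)
      * (1 - ((‖a‖ ^ 2 : ℝ) : ℂ) * Complex.exp (Complex.I * (Real.pi : ℂ) * (α : ℂ)))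
      + Complex.I * (γ : ℂ) * (((2 : ℝ) ^ (1 + α) : ℝ) : ℂ)
        * Complex.exp (Complex.I * (Real.pi : ℂ) * (α : ℂ) / 2)
        * ((Real.Gamma ((3 + α) / 2) : ℝ) : ℂ)) / Dcoef α a γ E)‖ ^ 2

/-! For `γ = 0` the denominator is the real number `c (1 + |a|²)` with
`c = E^{(1+α)/2} Γ((1-α)/2)`, and `c` also factors out of both numerators; since `α < 1`
makes `c ≠ 0`, it cancels, taking all dependence on `E` with it. What remains are the
squared moduli of `1 + e^{iπα}` and `1 - |a|² e^{iπα}`, i.e. the law of cosines. -/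

open Complex
open scoped Real

lemma norm_one_add_ofReal_mul_exp_mul_I_sq (r θ : ℝ) :
    ‖1 + (r : ℂ) * exp (θ * I)‖ ^ 2 = 1 + r ^ 2 + 2 * r * Real.cos θ := by
  rw [Complex.sq_norm, exp_mul_I]
  simp only [normSq_apply, add_re, one_re, mul_re, ofReal_re, cos_ofReal_re, sin_ofReal_re, I_re,
    mul_zero, sin_ofReal_im, I_im, mul_one, sub_self, add_zero, ofReal_im, add_im, cos_ofReal_im,
    mul_im, zero_add, zero_mul, sub_zero, one_im]
  linear_combination r ^ 2 * Real.sin_sq_add_cos_sq θ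

lemma norm_ofReal_mul_div_ofReal_mul_sq {c : ℝ} (hc : c ≠ 0) (d : ℝ) (z : ℂ) :
    ‖(c : ℂ) * z / ((c * d : ℝ) : ℂ)‖ ^ 2 = ‖z‖ ^ 2 / d ^ 2 := by
  rw [ofReal_mul, mul_div_mul_left _ _ (ofReal_ne_zero.mpr hc), norm_div, div_pow,
    Complex.norm_real, Real.norm_eq_abs, sq_abs]

lemma I_mul_pi_mul_ofReal (α : ℝ) : I * π * α = ((π * α : ℝ) : ℂ) * I := by
  push_cast
  ring

section GammaZero

variable {α : ℝ} (a : ℂ) {E : ℝ}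

lemma rpow_mul_Gamma_ne_zero (hα : α < 1) (hE : 0 < E) :
    E ^ ((1 + α) / 2) * Real.Gamma ((1 - α) / 2) ≠ 0 :=
  (mul_pos (Real.rpow_pos_of_pos hE _) (Real.Gamma_pos_of_pos (by linarith))).ne'

lemma Dcoef_gamma_zero :
    Dcoef α a 0 E = ((E ^ ((1 + α) / 2) * Real.Gamma ((1 - α) / 2) * (1 + ‖a‖ ^ 2) : ℝ) : ℂ) := by
  simp [Dcoef]

lemma Tcoef_gamma_zero (hα : α < 1) (hE : 0 < E) :
    Tcoef α a 0 E = 2 * ‖a‖ ^ 2 * (1 + Real.cos (π * α)) / (1 + ‖a‖ ^ 2) ^ 2 := by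
  have h := norm_one_add_ofReal_mul_exp_mul_I_sq 1 (π * α)
  rw [ofReal_one, one_mul] at h
  rw [Tcoef, Dcoef_gamma_zero, mul_assoc,
    norm_ofReal_mul_div_ofReal_mul_sq (rpow_mul_Gamma_ne_zero hα hE), norm_mul, mul_pow,
    I_mul_pi_mul_ofReal, h, norm_conj]
  ring

lemma Rcoef_gamma_zero (hα : α < 1) (hE : 0 < E) :
    Rcoef α a 0 E
      = (1 + ‖a‖ ^ 4 - 2 * ‖a‖ ^ 2 * Real.cos (π * α)) / (1 + ‖a‖ ^ 2) ^ 2 := by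
  have h := norm_one_add_ofReal_mul_exp_mul_I_sq (-‖a‖ ^ 2) (π * α)
  rw [ofReal_neg, neg_mul, ← sub_eq_add_neg] at h
  simp only [Rcoef, ofReal_zero, mul_zero, zero_mul, add_zero]
  rw [Dcoef_gamma_zero, norm_ofReal_mul_div_ofReal_mul_sq (rpow_mul_Gamma_ne_zero hα hE),
    I_mul_pi_mul_ofReal, h]
  ring

end GammaZero

/-- for `γ = 0` the transmission and reflection coefficients are
independent of the energy `E`, with explicit values; in particular for the
bridging protocol (`a = 1`, `γ = 0`) one has `T = (1+cos πα)/2`, `R = (1−cos πα)/2`. -/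
theorem TR_gamma_zero (α : ℝ) (hα : α ∈ Set.Ico (0 : ℝ) 1) (a : ℂ)
    (E : ℝ) (hE : 0 < E) :
    Tcoef α a 0 E
        = 2 * ‖a‖ ^ 2 * (1 + Real.cos (Real.pi * α))
          / (1 + ‖a‖ ^ 2) ^ 2 ∧
    Rcoef α a 0 E
        = (1 + ‖a‖ ^ 4 - 2 * ‖a‖ ^ 2 * Real.cos (Real.pi * α))
          / (1 + ‖a‖ ^ 2) ^ 2 ∧
    Tcoef α 1 0 E = (1 + Real.cos (Real.pi * α)) / 2 ∧
    Rcoef α 1 0 E = (1 - Real.cos (Real.pi * α)) / 2 := by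
  refine ⟨Tcoef_gamma_zero a hα.2 hE, Rcoef_gamma_zero a hα.2 hE, ?_, ?_⟩
  · rw [Tcoef_gamma_zero 1 hα.2 hE, norm_one]
    ring
  · rw [Rcoef_gamma_zero 1 hα.2 hE, norm_one]
    ring
end

section
/- For every α ∈ [0,1), a ∈ ℂ and γ ∈ ℝ, in the high-energy limit the scattering is independent of the extension parameter γ: T(α,a,γ,E) → 2|a|²(1+cos πα)/(1+|a|²)² and R(α,a,γ,E) → (1+|a|⁴−2|a|² cos πα)/(1+|a|²)² as E → +∞. -/
open Filter Topology

/-! As `E → ∞` the denominator `D` grows like `E^{(1+α)/2} Γ((1-α)/2) (1+|a|²)`, while the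
`γ`-term stays constant. Dividing numerator and denominator by `E^{(1+α)/2} Γ((1-α)/2)` (which
tends to `+∞` because `α < 1` makes the Gamma factor positive), both amplitudes tend to their
`γ`-free values `(1 + e^{iπα}) ā / (1+|a|²)` and `(1 - |a|² e^{iπα}) / (1+|a|²)`, whose squared
moduli follow from `|1 - t e^{iθ}|² = 1 + t² - 2t cos θ`. -/

open Bornology

theorem tendsto_mul_add_div_mul_add_cobounded {𝕜 ι : Type*} [NormedField 𝕜] {l : Filter ι}
    {s : ι → 𝕜} (hs : Tendsto s l (cobounded 𝕜)) (A B C D : 𝕜) (hC : C ≠ 0) :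
    Tendsto (fun x => (s x * A + B) / (s x * C + D)) l (𝓝 (A / C)) := by
  have hinv : Tendsto (fun x => (s x)⁻¹) l (𝓝 0) := tendsto_inv₀_cobounded.comp hs
  have hlim : Tendsto (fun x => (A + B * (s x)⁻¹) / (C + D * (s x)⁻¹)) l
      (𝓝 ((A + B * 0) / (C + D * 0))) :=
    (tendsto_const_nhds.add (tendsto_const_nhds.mul hinv)).div
      (tendsto_const_nhds.add (tendsto_const_nhds.mul hinv)) (by simpa using hC)
  rw [mul_zero, add_zero, mul_zero, add_zero] at hlim
  refine hlim.congr' ?_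
  filter_upwards [hs.eventually_ne_cobounded 0] with x hx
  rw [← mul_div_mul_left _ _ hx]
  congr 1 <;> field_simp

theorem Complex.sq_norm_one_sub_ofReal_mul_exp (t θ : ℝ) :
    ‖1 - (t : ℂ) * Complex.exp (θ * Complex.I)‖ ^ 2 = 1 + t ^ 2 - 2 * t * Real.cos θ := by
  rw [Complex.exp_mul_I, ← Complex.ofReal_cos, ← Complex.ofReal_sin, Complex.sq_norm,
    show 1 - (t : ℂ) * (Real.cos θ + Real.sin θ * Complex.I)
      = ((1 - t * Real.cos θ : ℝ) : ℂ) + ((-(t * Real.sin θ) : ℝ) : ℂ) * Complex.I by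
        push_cast; ring, Complex.normSq_add_mul_I]
  linear_combination t ^ 2 * Real.sin_sq_add_cos_sq θ

theorem Complex.sq_norm_one_add_exp (θ : ℝ) :
    ‖1 + Complex.exp (θ * Complex.I)‖ ^ 2 = 2 * (1 + Real.cos θ) := by
  have h := Complex.sq_norm_one_sub_ofReal_mul_exp (-1) θ
  rw [Complex.ofReal_neg, Complex.ofReal_one, neg_one_mul, sub_neg_eq_add] at h
  linear_combination h

/-- high-energy limit of the scattering coefficients, independent of
the extension parameter `γ`. -/
theorem TR_high_energy_limit (α : ℝ) (hα : α ∈ Set.Ico (0 : ℝ) 1) (a : ℂ) (γ : ℝ) :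
    Tendsto (fun E : ℝ => Tcoef α a γ E) atTop
      (𝓝 (2 * ‖a‖ ^ 2 * (1 + Real.cos (Real.pi * α))
        / (1 + ‖a‖ ^ 2) ^ 2)) ∧
    Tendsto (fun E : ℝ => Rcoef α a γ E) atTop
      (𝓝 ((1 + ‖a‖ ^ 4 - 2 * ‖a‖ ^ 2 * Real.cos (Real.pi * α))
        / (1 + ‖a‖ ^ 2) ^ 2)) := by
  obtain ⟨hα0, hα1⟩ := hα
  set K : ℂ := Complex.I * (γ : ℂ) * (((2 : ℝ) ^ (1 + α) : ℝ) : ℂ)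
      * Complex.exp (Complex.I * (Real.pi : ℂ) * (α : ℂ) / 2)
      * ((Real.Gamma ((3 + α) / 2) : ℝ) : ℂ)
  have hs : Tendsto (fun E : ℝ => ((E ^ ((1 + α) / 2) * Real.Gamma ((1 - α) / 2) : ℝ) : ℂ))
      atTop (cobounded ℂ) :=
    (RCLike.tendsto_ofReal_atTop_cobounded ℂ).comp
      ((tendsto_rpow_atTop (by linarith)).atTop_mul_const (Real.Gamma_pos_of_pos (by linarith)))
  have hC' : (0 : ℝ) < 1 + ‖a‖ ^ 2 := by positivity
  have hC : ((1 + ‖a‖ ^ 2 : ℝ) : ℂ) ≠ 0 := Complex.ofReal_ne_zero.mpr hC'.ne'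
  have hexp : Complex.exp (Complex.I * Real.pi * α) = Complex.exp (↑(Real.pi * α) * Complex.I) := by
    congr 1; push_cast; ring
  constructor
  · have h := ((tendsto_mul_add_div_mul_add_cobounded hs
      ((1 + Complex.exp (Complex.I * Real.pi * α)) * starRingEnd ℂ a) 0 _ K hC).norm).pow 2
    convert h using 1
    · funext E
      simp only [Tcoef, Dcoef, K]
      push_cast
      rw [add_zero, mul_assoc _ _ (starRingEnd ℂ a)]
    · rw [norm_div, norm_mul, div_pow, mul_pow, hexp, Complex.sq_norm_one_add_exp, Complex.norm_conj,
        Complex.norm_real, Real.norm_of_nonneg hC'.le]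
      field_simp
  · have h := ((tendsto_mul_add_div_mul_add_cobounded hs
      (1 - ((‖a‖ ^ 2 : ℝ) : ℂ) * Complex.exp (Complex.I * Real.pi * α)) K _ K hC).norm).pow 2
    convert h using 1
    · funext E
      simp only [Rcoef, Dcoef, K]
      push_cast
      rfl
    · rw [norm_div, div_pow, hexp, Complex.sq_norm_one_sub_ofReal_mul_exp,
        Complex.norm_real, Real.norm_of_nonneg hC'.le]
      field_simp
end

section
/- For every α ∈ [0,1), a ∈ ℂ and γ ∈ ℝ with γ ≠ 0, in the low-energy limit the scattering becomes totally reflecting: T(α,a,γ,E) → 0 and R(α,a,γ,E) → 1 as E → 0⁺. -/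
open Filter Topology

/-!
All three amplitudes are affine in `s = E ^ ((1 + α) / 2)`, and the energy-independent
term `c = i γ 2^(1+α) e^(iπα/2) Γ((3+α)/2)` shared by the numerator of `R` and by `D` is
nonzero when `γ ≠ 0`. As `E → 0⁺` we have `s → 0`, so `D → c`, the amplitude of `T`
tends to `0 / c = 0` and that of `R` to `c / c = 1`.
-/

theorem tendsto_mul_add_div_mul_add {X 𝕜 : Type*} [NormedField 𝕜] {l : Filter X}
    {f : X → 𝕜} (hf : Tendsto f l (𝓝 0)) (u v w : 𝕜) {c : 𝕜} (hc : c ≠ 0) :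
    Tendsto (fun x => (f x * u + w) / (f x * v + c)) l (𝓝 (w / c)) := by
  have hnum : Tendsto (fun x => f x * u + w) l (𝓝 w) := by
    simpa using (hf.mul_const u).add_const w
  have hden : Tendsto (fun x => f x * v + c) l (𝓝 c) := by
    simpa using (hf.mul_const v).add_const c
  exact hnum.div hden hc

theorem tendsto_ofReal_rpow_nhdsGT_zero {p : ℝ} (hp : 0 < p) :
    Tendsto (fun E : ℝ => ((E ^ p : ℝ) : ℂ)) (𝓝[>] 0) (𝓝 0) := by
  have h := (Real.continuousAt_rpow_const 0 p (Or.inr hp.le)).tendsto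
  rw [Real.zero_rpow hp.ne'] at h
  simpa only [Complex.ofReal_zero] using (h.mono_left nhdsWithin_le_nhds).ofReal

namespace Grushin

noncomputable def couplingTerm (α γ : ℝ) : ℂ :=
  Complex.I * (γ : ℂ) * (((2 : ℝ) ^ (1 + α) : ℝ) : ℂ)
    * Complex.exp (Complex.I * (Real.pi : ℂ) * (α : ℂ) / 2)
    * ((Real.Gamma ((3 + α) / 2) : ℝ) : ℂ)

theorem couplingTerm_ne_zero {α γ : ℝ} (hα : -3 < α) (hγ : γ ≠ 0) :
    couplingTerm α γ ≠ 0 := by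
  have hΓ : Real.Gamma ((3 + α) / 2) ≠ 0 := (Real.Gamma_pos_of_pos (by linarith)).ne'
  have h2 : (2 : ℝ) ^ (1 + α) ≠ 0 := (Real.rpow_pos_of_pos two_pos _).ne'
  simp [couplingTerm, hγ, hΓ, h2, Complex.exp_ne_zero]

variable (α : ℝ) (a : ℂ) (γ E : ℝ)

theorem Dcoef_eq :
    Dcoef α a γ E = ((E ^ ((1 + α) / 2) : ℝ) : ℂ)
      * ((Real.Gamma ((1 - α) / 2) * (1 + ‖a‖ ^ 2) : ℝ) : ℂ) + couplingTerm α γ := by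
  simp only [Dcoef, couplingTerm]
  push_cast
  ring

theorem Tcoef_eq :
    Tcoef α a γ E = ‖(((E ^ ((1 + α) / 2) : ℝ) : ℂ)
      * ((Real.Gamma ((1 - α) / 2) : ℝ) * (1 + Complex.exp (Complex.I * Real.pi * α))
        * starRingEnd ℂ a) + 0) / Dcoef α a γ E‖ ^ 2 := by
  simp only [Tcoef]
  push_cast
  ring_nf

theorem Rcoef_eq :
    Rcoef α a γ E = ‖(((E ^ ((1 + α) / 2) : ℝ) : ℂ)
      * ((Real.Gamma ((1 - α) / 2) : ℝ)
        * (1 - ((‖a‖ ^ 2 : ℝ) : ℂ) * Complex.exp (Complex.I * Real.pi * α)))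
      + couplingTerm α γ) / Dcoef α a γ E‖ ^ 2 := by
  simp only [Rcoef, couplingTerm]
  push_cast
  ring_nf

end Grushin

open Grushin in
/-- low-energy limit of the scattering coefficients for `γ ≠ 0`:
total reflection. -/
theorem TR_low_energy_limit (α : ℝ) (hα : α ∈ Set.Ico (0 : ℝ) 1) (a : ℂ) (γ : ℝ)
    (hγ : γ ≠ 0) :
    Tendsto (fun E : ℝ => Tcoef α a γ E) (𝓝[>] 0) (𝓝 0) ∧
    Tendsto (fun E : ℝ => Rcoef α a γ E) (𝓝[>] 0) (𝓝 1) := by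
  have hc := couplingTerm_ne_zero (by linarith [hα.1]) hγ
  have hs := tendsto_ofReal_rpow_nhdsGT_zero (p := (1 + α) / 2) (by linarith [hα.1])
  simp only [Tcoef_eq, Rcoef_eq, Dcoef_eq]
  constructor
  · convert (tendsto_mul_add_div_mul_add hs _ _ 0 hc).norm.pow 2
    simp
  · convert (tendsto_mul_add_div_mul_add hs _ _ _ hc).norm.pow 2
    simp [hc]
end

section
/- Let α ∈ (0,1), a ∈ ℂ with |a| = 1, and γ > 0. Then the scattering is reflection-less at the energy E := (2^{1+α}·γ·Γ((3+α)/2)·sin(πα/2) / (Γ((1−α)/2)·(1−cos πα)))^{2/(1+α)}; that is, E > 0, R(α,a,γ,E) = 0 and T(α,a,γ,E) = 1. -/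
open Filter Topology

/-! Write `X = E^{(1+α)/2} Γ((1-α)/2)`, `c = γ 2^{1+α} Γ((3+α)/2)` and `ω = e^{iπα/2}`.
For `|a| = 1` the denominator is `D = 2X + icω`, the reflection numerator is
`X(1 - ω²) + icω = D - X(1 + ω²)` and the transmission numerator is `X(1 + ω²) ā`.
Since `1 - ω² = -2i sin(πα/2) ω`, the energy `E` is chosen exactly so that
`c = 2X sin(πα/2)`, which makes `D = X(1 + ω²) = 2X cos(πα/2) ω ≠ 0`;
hence `R = 0` and `T = |ā|² = 1`. -/

namespace Complex

theorem one_sub_exp_mul_I_sq (θ : ℂ) :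
    1 - exp (θ * I) ^ 2 = -2 * I * sin θ * exp (θ * I) := by
  have h : exp (-θ * I) * exp (θ * I) = 1 := by rw [← exp_add]; simp
  linear_combination (I * exp (θ * I)) * two_sin θ - h
    + (exp (θ * I) * exp (-θ * I) - exp (θ * I) ^ 2) * I_sq

theorem one_add_exp_mul_I_sq (θ : ℂ) : 1 + exp (θ * I) ^ 2 = 2 * cos θ * exp (θ * I) := by
  have h : exp (-θ * I) * exp (θ * I) = 1 := by rw [← exp_add]; simp
  linear_combination (-exp (θ * I)) * two_cos θ - h

end Complex

theorem reflectionless_energy_balance {α γ : ℝ} (hα : α ∈ Set.Ioo 0 1) (hγ : 0 < γ) :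
    let E : ℝ := ((2 : ℝ) ^ (1 + α) * γ * Real.Gamma ((3 + α) / 2)
        * Real.sin (Real.pi * α / 2)
        / (Real.Gamma ((1 - α) / 2) * (1 - Real.cos (Real.pi * α)))) ^ (2 / (1 + α))
    0 < E ∧ 0 < E ^ ((1 + α) / 2) * Real.Gamma ((1 - α) / 2) ∧
      γ * 2 ^ (1 + α) * Real.Gamma ((3 + α) / 2)
        = 2 * (E ^ ((1 + α) / 2) * Real.Gamma ((1 - α) / 2)) * Real.sin (Real.pi * α / 2) := by
  intro E
  obtain ⟨hα0, hα1⟩ := hα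
  have hsin : 0 < Real.sin (Real.pi * α / 2) :=
    Real.sin_pos_of_pos_of_lt_pi (by positivity) (by nlinarith [Real.pi_pos])
  have hΓ : 0 < Real.Gamma ((1 - α) / 2) := Real.Gamma_pos_of_pos (by linarith)
  have hcos : 1 - Real.cos (Real.pi * α) = 2 * Real.sin (Real.pi * α / 2) ^ 2 := by
    rw [Real.sin_sq_eq_half_sub]; ring_nf
  set s := Real.sin (Real.pi * α / 2)
  set B := (2 : ℝ) ^ (1 + α) * γ * Real.Gamma ((3 + α) / 2) * s
    / (Real.Gamma ((1 - α) / 2) * (1 - Real.cos (Real.pi * α))) with hB_def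
  have hB : 0 < B := by
    rw [hB_def, hcos]
    have := Real.Gamma_pos_of_pos (show 0 < (3 + α) / 2 by linarith)
    positivity
  have hEB : E ^ ((1 + α) / 2) = B := by
    rw [← inv_div]; exact Real.rpow_rpow_inv hB.le (by positivity)
  refine ⟨Real.rpow_pos_of_pos hB _, hEB ▸ mul_pos hB hΓ, ?_⟩
  rw [hEB, hB_def, hcos]
  field_simp

open Complex

section Scattering

variable {α γ E : ℝ} {a : ℂ}

theorem exp_I_mul_pi_mul_div_two (α : ℝ) :
    exp (I * Real.pi * α / 2) = exp ((Real.pi * α / 2 : ℝ) * I) := by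
  congr 1; push_cast; ring

theorem exp_I_mul_pi_mul (α : ℝ) :
    exp (I * Real.pi * α) = exp ((Real.pi * α / 2 : ℝ) * I) ^ 2 := by
  rw [← exp_nat_mul]; congr 1; push_cast; ring

theorem Dcoef_eq_of_norm_eq_one (ha : ‖a‖ = 1)
    (hc : γ * 2 ^ (1 + α) * Real.Gamma ((3 + α) / 2)
      = 2 * (E ^ ((1 + α) / 2) * Real.Gamma ((1 - α) / 2)) * Real.sin (Real.pi * α / 2)) :
    Dcoef α a γ E = ((E ^ ((1 + α) / 2) * Real.Gamma ((1 - α) / 2) : ℝ) : ℂ)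
      * (1 + exp (I * Real.pi * α)) := by
  unfold Dcoef
  rw [ha, exp_I_mul_pi_mul_div_two, exp_I_mul_pi_mul]
  set θ : ℝ := Real.pi * α / 2
  have hcC := congrArg ofReal hc
  push_cast at hcC ⊢
  linear_combination ((E ^ ((1 + α) / 2) : ℝ) : ℂ) * (Real.Gamma ((1 - α) / 2) : ℂ)
    * one_sub_exp_mul_I_sq θ + I * exp (θ * I) * hcC

theorem Rcoef_eq_zero_of_norm_eq_one (ha : ‖a‖ = 1)
    (hc : γ * 2 ^ (1 + α) * Real.Gamma ((3 + α) / 2)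
      = 2 * (E ^ ((1 + α) / 2) * Real.Gamma ((1 - α) / 2)) * Real.sin (Real.pi * α / 2)) :
    Rcoef α a γ E = 0 := by
  have hD := Dcoef_eq_of_norm_eq_one (a := a) ha hc
  rw [Dcoef, ha] at hD
  unfold Rcoef
  rw [sq_eq_zero_iff, norm_eq_zero, div_eq_zero_iff, ha]
  left
  push_cast at hD ⊢
  linear_combination hD

theorem Tcoef_eq_one_of_norm_eq_one (hα : α ∈ Set.Ioo (-1) 1) (ha : ‖a‖ = 1)
    (hc : γ * 2 ^ (1 + α) * Real.Gamma ((3 + α) / 2)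
      = 2 * (E ^ ((1 + α) / 2) * Real.Gamma ((1 - α) / 2)) * Real.sin (Real.pi * α / 2))
    (hX : E ^ ((1 + α) / 2) * Real.Gamma ((1 - α) / 2) ≠ 0) :
    Tcoef α a γ E = 1 := by
  have hcos : Real.cos (Real.pi * α / 2) ≠ 0 := by
    obtain ⟨hα₀, hα₁⟩ := hα
    exact (Real.cos_pos_of_mem_Ioo ⟨by nlinarith [Real.pi_pos], by nlinarith [Real.pi_pos]⟩).ne'
  have hD : Dcoef α a γ E ≠ 0 := by
    rw [Dcoef_eq_of_norm_eq_one ha hc, exp_I_mul_pi_mul, one_add_exp_mul_I_sq, ← ofReal_cos]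
    exact mul_ne_zero (ofReal_ne_zero.2 hX)
      (mul_ne_zero (mul_ne_zero two_ne_zero (ofReal_ne_zero.2 hcos)) (exp_ne_zero _))
  unfold Tcoef
  rw [← Dcoef_eq_of_norm_eq_one ha hc, mul_div_cancel_left₀ _ hD]
  simp [ha]

end Scattering

/-- for `α ∈ (0,1)`, `|a| = 1` and `γ > 0`, the scattering is
reflection-less at the distinguished energy `E`. -/
theorem reflectionless_energy (α : ℝ) (hα : α ∈ Set.Ioo (0 : ℝ) 1) (a : ℂ)
    (ha : ‖a‖ = 1) (γ : ℝ) (hγ : 0 < γ) :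
    let E : ℝ := ((2 : ℝ) ^ (1 + α) * γ * Real.Gamma ((3 + α) / 2)
        * Real.sin (Real.pi * α / 2)
        / (Real.Gamma ((1 - α) / 2) * (1 - Real.cos (Real.pi * α)))) ^ (2 / (1 + α))
    0 < E ∧ Rcoef α a γ E = 0 ∧ Tcoef α a γ E = 1 := by
  intro E
  obtain ⟨hE, hX, hc⟩ := reflectionless_energy_balance hα hγ
  exact ⟨hE, Rcoef_eq_zero_of_norm_eq_one ha hc,
    Tcoef_eq_one_of_norm_eq_one ⟨by linarith [hα.1], hα.2⟩ ha hc hX.ne'⟩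
end

section
/- For every fixed a ∈ ℂ, γ ∈ ℝ and E > 0, at the upper edge of the admissible range of the metric parameter the transmission is completely suppressed: T(α,a,γ,E) → 0 and R(α,a,γ,E) → 1 as α → 1⁻ (limit along α ∈ [0,1) tending to 1 from the left). -/
open Filter Topology

/-!
As `α → 1⁻` the factor `Γ((1 - α)/2)` blows up, while every other ingredient of the numerators
and of `D` stays bounded and converges. Dividing numerator and denominator by this factor,
`T → |E (1 + e^{iπ}) ā / (E (1 + |a|²))|² = 0` and `R → |E (1 - |a|² e^{iπ}) / (E (1 + |a|²))|² = 1`.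
The blow-up is read off from the entire function `1/Γ`, which vanishes at `0`.
-/

open Complex
open scoped Real ComplexConjugate

theorem tendsto_mul_add_div_mul_add_s5 {ι 𝕜 : Type*} [NormedField 𝕜] {l : Filter ι}
    {x p q r s : ι → 𝕜} {p₀ q₀ r₀ s₀ : 𝕜}
    (hx : Tendsto (fun t ↦ (x t)⁻¹) l (𝓝 0)) (hx₀ : ∀ᶠ t in l, x t ≠ 0)
    (hp : Tendsto p l (𝓝 p₀)) (hq : Tendsto q l (𝓝 q₀)) (hq₀ : q₀ ≠ 0)
    (hr : Tendsto r l (𝓝 r₀)) (hs : Tendsto s l (𝓝 s₀)) :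
    Tendsto (fun t ↦ (x t * p t + r t) / (x t * q t + s t)) l (𝓝 (p₀ / q₀)) := by
  have hlim : Tendsto (fun t ↦ (p t + (x t)⁻¹ * r t) / (q t + (x t)⁻¹ * s t)) l
      (𝓝 ((p₀ + 0 * r₀) / (q₀ + 0 * s₀))) :=
    (hp.add (hx.mul hr)).div (hq.add (hx.mul hs)) (by simpa using hq₀)
  rw [zero_mul, zero_mul, add_zero, add_zero] at hlim
  refine hlim.congr' (hx₀.mono fun t ht ↦ ?_)
  rw [← mul_div_mul_left _ _ ht, mul_add, mul_add, mul_inv_cancel_left₀ ht,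
    mul_inv_cancel_left₀ ht]

theorem tendsto_inv_Gamma_nhds_zero : Tendsto (fun s : ℂ ↦ (Gamma s)⁻¹) (𝓝 0) (𝓝 0) := by
  simpa [Gamma_zero] using differentiable_one_div_Gamma.continuous.tendsto 0

theorem tendsto_inv_Gamma_one_sub_div_two :
    Tendsto (fun α : ℝ ↦ ((Real.Gamma ((1 - α) / 2) : ℝ) : ℂ)⁻¹) (𝓝 1) (𝓝 0) := by
  have harg : Tendsto (fun α : ℝ ↦ (((1 - α) / 2 : ℝ) : ℂ)) (𝓝 1) (𝓝 0) := by
    have : Continuous (fun α : ℝ ↦ (((1 - α) / 2 : ℝ) : ℂ)) := by fun_prop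
    simpa using this.tendsto 1
  simpa only [Function.comp_def, Gamma_ofReal] using tendsto_inv_Gamma_nhds_zero.comp harg

theorem tendsto_ofReal_rpow_one_add_div_two {E : ℝ} (hE : 0 < E) :
    Tendsto (fun α : ℝ ↦ ((E ^ ((1 + α) / 2) : ℝ) : ℂ)) (𝓝 1) (𝓝 E) := by
  have : ContinuousAt (fun α : ℝ ↦ ((E ^ ((1 + α) / 2) : ℝ) : ℂ)) 1 :=
    continuous_ofReal.continuousAt.comp ((Real.continuousAt_const_rpow hE.ne').comp (by fun_prop))
  simpa using this.tendsto

theorem tendsto_exp_I_mul_pi_mul : Tendsto (fun α : ℝ ↦ exp (I * π * α)) (𝓝 1) (𝓝 (-1)) := by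
  have : Continuous (fun α : ℝ ↦ exp (I * π * α)) := by fun_prop
  simpa [mul_comm I] using this.tendsto 1

noncomputable def couplingTerm (α γ : ℝ) : ℂ :=
  I * γ * ((2 : ℝ) ^ (1 + α) : ℝ) * exp (I * π * α / 2) * (Real.Gamma ((3 + α) / 2) : ℝ)

theorem continuousAt_couplingTerm (γ : ℝ) : ContinuousAt (couplingTerm · γ) 1 := by
  have hGamma : ContinuousAt (fun α : ℝ ↦ Real.Gamma ((3 + α) / 2)) 1 := by
    refine (Real.differentiableAt_Gamma fun m h ↦ ?_).continuousAt.comp (by fun_prop)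
    norm_num at h
    linarith [Nat.cast_nonneg (α := ℝ) m]
  have hpow : ContinuousAt (fun α : ℝ ↦ (2 : ℝ) ^ (1 + α)) 1 :=
    (Real.continuousAt_const_rpow two_ne_zero).comp (by fun_prop)
  unfold couplingTerm
  fun_prop

-- Both coefficients in the shape `‖(x p + r) / (x q + s)‖ ^ 2` with `x = Γ((1 - α)/2)`.
theorem Tcoef_eq (α : ℝ) (a : ℂ) (γ E : ℝ) :
    Tcoef α a γ E = ‖((Real.Gamma ((1 - α) / 2) : ℝ) *
        ((E ^ ((1 + α) / 2) : ℝ) * (1 + exp (I * π * α)) * conj a) + 0) /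
      ((Real.Gamma ((1 - α) / 2) : ℝ) * ((E ^ ((1 + α) / 2) : ℝ) * (1 + ‖a‖ ^ 2 : ℝ))
        + couplingTerm α γ)‖ ^ 2 := by
  simp only [Tcoef, Dcoef, couplingTerm]
  push_cast
  ring_nf

theorem Rcoef_eq (α : ℝ) (a : ℂ) (γ E : ℝ) :
    Rcoef α a γ E = ‖((Real.Gamma ((1 - α) / 2) : ℝ) *
        ((E ^ ((1 + α) / 2) : ℝ) * (1 - (‖a‖ ^ 2 : ℝ) * exp (I * π * α))) + couplingTerm α γ) /
      ((Real.Gamma ((1 - α) / 2) : ℝ) * ((E ^ ((1 + α) / 2) : ℝ) * (1 + ‖a‖ ^ 2 : ℝ))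
        + couplingTerm α γ)‖ ^ 2 := by
  simp only [Rcoef, Dcoef, couplingTerm]
  push_cast
  ring_nf

/-- at the upper edge `α → 1⁻` of the admissible range of the metric
parameter (along `α ∈ [0,1)`), the transmission is completely suppressed. -/
theorem TR_alpha_to_one (a : ℂ) (γ E : ℝ) (hE : 0 < E) :
    Tendsto (fun α : ℝ => Tcoef α a γ E) (𝓝[Set.Ico (0 : ℝ) 1] 1) (𝓝 0) ∧
    Tendsto (fun α : ℝ => Rcoef α a γ E) (𝓝[Set.Ico (0 : ℝ) 1] 1) (𝓝 1) := by
  have hl : 𝓝[Set.Ico (0 : ℝ) 1] 1 ≤ 𝓝 1 := nhdsWithin_le_nhds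
  have hx := tendsto_inv_Gamma_one_sub_div_two.mono_left hl
  have hx₀ : ∀ᶠ α in 𝓝[Set.Ico (0 : ℝ) 1] 1, ((Real.Gamma ((1 - α) / 2) : ℝ) : ℂ) ≠ 0 :=
    eventually_nhdsWithin_of_forall fun α hα ↦
      ofReal_ne_zero.2 (Real.Gamma_pos_of_pos (by linarith [hα.2])).ne'
  have hP := (tendsto_ofReal_rpow_one_add_div_two hE).mono_left hl
  have hu := tendsto_exp_I_mul_pi_mul.mono_left hl
  have hc := (continuousAt_couplingTerm γ).tendsto.mono_left hl
  have hq := hP.mul_const ((1 + ‖a‖ ^ 2 : ℝ) : ℂ)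
  have hq₀ : (E : ℂ) * ((1 + ‖a‖ ^ 2 : ℝ) : ℂ) ≠ 0 := by
    norm_cast; positivity
  constructor
  · have h := tendsto_mul_add_div_mul_add_s5 hx hx₀
      ((hP.mul ((tendsto_const_nhds (x := 1)).add hu)).mul_const (conj a)) hq hq₀
      (tendsto_const_nhds (x := 0)) hc
    rw [add_neg_cancel, mul_zero, zero_mul, zero_div] at h
    simpa only [norm_zero, zero_pow two_ne_zero, ← Tcoef_eq] using h.norm.pow 2
  · have hp : Tendsto
        (fun α : ℝ ↦ ((E ^ ((1 + α) / 2) : ℝ) : ℂ) * (1 - (‖a‖ ^ 2 : ℝ) * exp (I * π * α)))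
        (𝓝[Set.Ico (0 : ℝ) 1] 1) (𝓝 (E * ((1 + ‖a‖ ^ 2 : ℝ) : ℂ))) := by
      convert hP.mul (tendsto_const_nhds.sub (tendsto_const_nhds.mul hu)) using 2
      push_cast; ring
    have h := tendsto_mul_add_div_mul_add_s5 hx hx₀ hp hq hq₀ hc hc
    rw [div_self hq₀] at h
    simpa only [norm_one, one_pow, ← Rcoef_eq] using h.norm.pow 2
end
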